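/- arXiv:0907.3386 — 4 statements merged into one kernel-verified Lean document; each statement's English description precedes it below -/
import Mathlib

section
/- Let {ρ_k}_{k∈K} be a finite ensemble of positive semidefinite operators on a finite-dimensional Hilbert space H with Σ_k Tr ρ_k = 1. Then the optimal success probability P_opt = max over POVMs {M_k} of Σ_k Tr(M_k ρ_k) satisfies P_opt ≤ Λ, where Λ = Tr√(Σ_k ρ_k²). -/
/-!
Put `S = ∑ k, ρ k ^ 2`, `q = S^{1/4}` and let `p` be the pseudo-inverse of `q`. Since
`ρ k ^ 2 ≤ S`, each `ρ k` lives on the support of `S`, so `q * p * ρ k = ρ k`, and expanding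
`0 ≤ (q - p * ρ k)ᴴ * (q - p * ρ k)` gives the operator inequality
`2 • ρ k ≤ √S + ρ k * p * p * ρ k`. Pairing it with `M k ≥ 0` and using `∑ k, M k ≤ 1` bounds
twice the success probability by `Tr √S + ∑ k, Tr (ρ k * p * p * ρ k) = Tr √S + Tr (p * p * S)`,
which is `2 Tr √S`.
-/

open Matrix ComplexOrder

/-- The positive semidefinite square root of a positive semidefinite matrix
(the definition of `Matrix.PosSemidef.sqrt` in the older Mathlib, since removed). -/
noncomputable def Matrix.PosSemidef.sqrt {n 𝕜 : Type*} [Fintype n] [RCLike 𝕜] [DecidableEq n]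
    {A : Matrix n n 𝕜} (hA : A.PosSemidef) : Matrix n n 𝕜 :=
  hA.1.eigenvectorUnitary.1 * diagonal ((↑) ∘ (√·) ∘ hA.1.eigenvalues) *
  (star hA.1.eigenvectorUnitary : Matrix n n 𝕜)

open scoped MatrixOrder

theorem add_self_le_of_mul_mul_eq_self {R : Type*} [Ring R] [StarRing R] [PartialOrder R]
    [StarOrderedRing R] {q p a : R} (hq : IsSelfAdjoint q) (hp : IsSelfAdjoint p)
    (ha : IsSelfAdjoint a) (h : q * p * a = a) : a + a ≤ q * q + a * p * p * a := by
  have h' : a * p * q = a := by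
    simpa [star_mul, hq.star_eq, hp.star_eq, ha.star_eq, mul_assoc] using congrArg star h
  rw [← sub_nonneg]
  convert star_mul_self_nonneg (q - p * a) using 1
  simp only [star_sub, star_mul, hq.star_eq, hp.star_eq, ha.star_eq, sub_mul, mul_sub,
    ← mul_assoc, h, h']
  abel

theorem cfc_sqrt_sqrt_mul_self {A : Type*} [Ring A] [StarRing A] [TopologicalSpace A]
    [Algebra ℝ A] [ContinuousFunctionalCalculus ℝ A IsSelfAdjoint] (a : A) :
    cfc (fun x => √√x) a * cfc (fun x => √√x) a = cfc Real.sqrt a := by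
  rw [← cfc_mul _ _ a]
  exact cfc_congr fun x _ => Real.mul_self_sqrt (Real.sqrt_nonneg x)

namespace Matrix

variable {n 𝕜 K : Type*} [Fintype n] [RCLike 𝕜] [Fintype K]

theorem mul_eq_zero_of_sum_conjTranspose_mul_self_mul_eq_zero {m : Type*} [Fintype m]
    {A : K → Matrix m n 𝕜} {E : Matrix n n 𝕜} (h : (∑ k, (A k)ᴴ * A k) * E = 0)
    (k : K) : A k * E = 0 := by
  have hsum : ∑ j, (A j * E)ᴴ * (A j * E) = 0 := by
    simpa [conjTranspose_mul, Finset.mul_sum, Finset.sum_mul, Matrix.mul_assoc] using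
      congrArg (Eᴴ * ·) h
  have := (Finset.sum_eq_zero_iff_of_nonneg fun j _ =>
    nonneg_iff_posSemidef.mpr (posSemidef_conjTranspose_mul_self (A j * E))).mp hsum k
    (Finset.mem_univ k)
  exact conjTranspose_mul_self_eq_zero.mp this

variable [DecidableEq n]

theorem PosSemidef.sqrt_eq_cfc {A : Matrix n n 𝕜} (hA : A.PosSemidef) :
    hA.sqrt = cfc Real.sqrt A :=
  (hA.1.cfc_eq _).symm

theorem continuousOn_spectrum_real (f : ℝ → ℝ) (A : Matrix n n 𝕜) :
    ContinuousOn f (spectrum ℝ A) :=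
  A.finite_real_spectrum.continuousOn f

theorem cfc_inv_sqrt_sqrt_mul_self_mul {A : Matrix n n 𝕜} (hA : IsSelfAdjoint A) :
    cfc (fun x => (√√x)⁻¹) A * cfc (fun x => (√√x)⁻¹) A * A = cfc Real.sqrt A := by
  have hc := fun f : ℝ → ℝ => continuousOn_spectrum_real f A
  calc _ = cfc (fun x => (√√x)⁻¹ * (√√x)⁻¹) A * cfc (fun x : ℝ => x) A := by
        rw [cfc_mul _ _ A (hc _) (hc _), cfc_id' ℝ A]
    _ = cfc Real.sqrt A := by
        rw [← cfc_mul _ _ A (hc _) (hc _)]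
        refine cfc_congr fun x _ => ?_
        rw [← mul_inv, Real.mul_self_sqrt (Real.sqrt_nonneg x), inv_mul_eq_div, Real.div_sqrt]

theorem mul_one_sub_cfc_inv_sqrt_sqrt_mul_cfc_sqrt_sqrt {A : Matrix n n 𝕜} (hA : 0 ≤ A) :
    A * (1 - cfc (fun x => (√√x)⁻¹) A * cfc (fun x => √√x) A) = 0 := by
  have hc := fun f : ℝ → ℝ => continuousOn_spectrum_real f A
  calc _ = cfc (fun x : ℝ => x) A * cfc (fun x => 1 - (√√x)⁻¹ * √√x) A := by
        rw [cfc_sub _ _ A (hc _) (hc _), cfc_const_one ℝ A, cfc_mul _ _ A (hc _) (hc _),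
          cfc_id' ℝ A]
    _ = cfc (fun _ : ℝ => (0 : ℝ)) A := by
        rw [← cfc_mul _ _ A (hc _) (hc _)]
        refine cfc_congr fun x hx => ?_
        rcases (spectrum_nonneg_of_nonneg hA hx).eq_or_lt with h | h
        · simp [← h]
        · rw [inv_mul_cancel₀ (by positivity), sub_self, mul_zero]
    _ = 0 := cfc_const_zero ℝ A

theorem trace_mul_nonneg {A B : Matrix n n 𝕜} (hA : 0 ≤ A) (hB : 0 ≤ B) :
    0 ≤ (A * B).trace := by
  obtain ⟨s, hs, rfl⟩ : ∃ s : Matrix n n 𝕜, IsSelfAdjoint s ∧ B = s * s :=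
    ⟨CFC.sqrt B, .of_nonneg (CFC.sqrt_nonneg B), (CFC.sqrt_mul_sqrt_self B).symm⟩
  rw [← mul_assoc, trace_mul_comm, ← mul_assoc]
  exact (nonneg_iff_posSemidef.mp (hs.conjugate_nonneg hA)).trace_nonneg

theorem trace_mul_le_trace_mul_of_le {M A B : Matrix n n 𝕜} (hM : 0 ≤ M)
    (h : A ≤ B) : (M * A).trace ≤ (M * B).trace := by
  simpa [mul_sub, trace_sub] using trace_mul_nonneg hM (sub_nonneg.mpr h)

theorem trace_mul_le_trace_of_le_one {M B : Matrix n n 𝕜} (hM : M ≤ 1)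
    (hB : 0 ≤ B) : (M * B).trace ≤ B.trace := by
  simpa [sub_mul, trace_sub] using trace_mul_nonneg (sub_nonneg.mpr hM) hB

theorem sum_trace_mul_add_self_le {M ρ X : K → Matrix n n 𝕜} {T : Matrix n n 𝕜}
    (hM : ∀ k, 0 ≤ M k) (hMsum : ∑ k, M k ≤ 1) (hT : 0 ≤ T) (hX : ∀ k, 0 ≤ X k)
    (hρ : ∀ k, ρ k + ρ k ≤ T + X k) :
    ∑ k, (M k * ρ k).trace + ∑ k, (M k * ρ k).trace ≤ T.trace + ∑ k, (X k).trace := by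
  have hM1 (k : K) : M k ≤ 1 :=
    (Finset.single_le_sum (fun j _ => hM j) (Finset.mem_univ k)).trans hMsum
  calc ∑ k, (M k * ρ k).trace + ∑ k, (M k * ρ k).trace
      = ∑ k, (M k * (ρ k + ρ k)).trace := by
        simp only [Matrix.mul_add, trace_add, Finset.sum_add_distrib]
    _ ≤ ∑ k, (M k * (T + X k)).trace :=
        Finset.sum_le_sum fun k _ => trace_mul_le_trace_mul_of_le (hM k) (hρ k)
    _ = ((∑ k, M k) * T).trace + ∑ k, (M k * X k).trace := by
        simp only [Matrix.mul_add, trace_add, Finset.sum_add_distrib, Finset.sum_mul, trace_sum]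
    _ ≤ T.trace + ∑ k, (X k).trace :=
        add_le_add (trace_mul_le_trace_of_le_one hMsum hT)
          (Finset.sum_le_sum fun k _ => trace_mul_le_trace_of_le_one (hM1 k) (hX k))

theorem exists_add_self_le_cfc_sqrt_sum_sq_add {ρ : K → Matrix n n 𝕜}
    (hρ : ∀ k, (ρ k).IsHermitian) :
    ∃ X : K → Matrix n n 𝕜, (∀ k, 0 ≤ X k) ∧
      (∀ k, ρ k + ρ k ≤ cfc Real.sqrt (∑ k, ρ k ^ 2) + X k) ∧
      ∑ k, (X k).trace = (cfc Real.sqrt (∑ k, ρ k ^ 2)).trace := by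
  have hsq (k : K) : ρ k ^ 2 = (ρ k)ᴴ * ρ k := by rw [sq, (hρ k).eq]
  set S := ∑ k, ρ k ^ 2
  have hS : 0 ≤ S := Finset.sum_nonneg fun k _ =>
    hsq k ▸ nonneg_iff_posSemidef.mpr (posSemidef_conjTranspose_mul_self _)
  set q := cfc (fun x => √√x) S
  -- `(0 : ℝ)⁻¹ = 0`, so `p` inverts `q` on its support and vanishes on its kernel.
  set p := cfc (fun x => (√√x)⁻¹) S
  have hq : q.IsHermitian := cfc_predicate _ _
  have hp : p.IsHermitian := cfc_predicate _ _
  have hqpρ (k : K) : q * p * ρ k = ρ k := by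
    have h := mul_eq_zero_of_sum_conjTranspose_mul_self_mul_eq_zero (A := ρ) (E := 1 - p * q)
      (by simp only [← hsq]; exact mul_one_sub_cfc_inv_sqrt_sqrt_mul_cfc_sqrt_sqrt hS) k
    have := congrArg conjTranspose h
    rw [conjTranspose_mul, conjTranspose_sub, conjTranspose_mul, conjTranspose_one, hp.eq, hq.eq,
      (hρ k).eq, conjTranspose_zero, Matrix.sub_mul, Matrix.one_mul, sub_eq_zero] at this
    exact this.symm
  refine ⟨fun k => ρ k * p * p * ρ k, fun k => ?_, fun k => ?_, ?_⟩
  · simpa [conjTranspose_mul, hp.eq, (hρ k).eq, Matrix.mul_assoc] using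
      nonneg_iff_posSemidef.mpr (posSemidef_conjTranspose_mul_self (p * ρ k))
  · rw [← cfc_sqrt_sqrt_mul_self]
    exact add_self_le_of_mul_mul_eq_self hq hp (hρ k) (hqpρ k)
  · calc ∑ k, (ρ k * p * p * ρ k).trace = ∑ k, (p * p * ρ k ^ 2).trace := by
          refine Finset.sum_congr rfl fun k _ => ?_
          rw [trace_mul_comm, sq, trace_mul_comm (p * p)]
          simp only [Matrix.mul_assoc]
      _ = (cfc Real.sqrt S).trace := by
          rw [← trace_sum, ← Finset.mul_sum, cfc_inv_sqrt_sqrt_mul_self_mul hS.isSelfAdjoint]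

end Matrix

theorem povm_success_le_holevo_curlander_general
    {n K : Type*} [Fintype n] [DecidableEq n] [Fintype K]
    (ρ : K → Matrix n n ℂ) (hρ : ∀ k, (ρ k).PosSemidef)
    (M : K → Matrix n n ℂ) (hM : ∀ k, (M k).PosSemidef)
    (hMsum : ((1 : Matrix n n ℂ) - ∑ k, M k).PosSemidef) :
    (∑ k, ((M k) * (ρ k)).trace).re ≤
      (Matrix.PosSemidef.sqrt
        (show (∑ k, (ρ k) ^ 2).PosSemidef from
          Finset.sum_induction _ Matrix.PosSemidef (fun a b ha hb => ha.add hb)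
            Matrix.PosSemidef.zero (fun k _ => (hρ k).pow 2))).trace.re := by
  obtain ⟨X, hX, hρX, hXtrace⟩ := exists_add_self_le_cfc_sqrt_sum_sq_add fun k => (hρ k).1
  have h := sum_trace_mul_add_self_le (fun k => (hM k).nonneg) (le_iff.mpr hMsum)
    (cfc_nonneg fun x _ => Real.sqrt_nonneg x) hX hρX
  rw [hXtrace] at h
  rw [PosSemidef.sqrt_eq_cfc]
  have := (Complex.le_def.mp h).1
  simp only [Complex.add_re] at this
  linarith

/-- Upper generalized Holevo–Curlander bound: for an ensemble `{ρ_k}` of positive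
semidefinite operators with `Σ Tr ρ_k = 1` on a finite-dimensional Hilbert space,
every POVM `{M_k}` has success probability at most `Λ = Tr √(Σ ρ_k²)`; hence so does
the optimal measurement. -/
theorem povm_success_le_holevo_curlander
    {n K : Type*} [Fintype n] [DecidableEq n] [Fintype K]
    (ρ : K → Matrix n n ℂ) (hρ : ∀ k, (ρ k).PosSemidef)
    (hnorm : (∑ k, (ρ k).trace) = 1)
    (M : K → Matrix n n ℂ) (hM : ∀ k, (M k).PosSemidef)
    (hMsum : ((1 : Matrix n n ℂ) - ∑ k, M k).PosSemidef) :
    (∑ k, ((M k) * (ρ k)).trace).re ≤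
      (Matrix.PosSemidef.sqrt
        (show (∑ k, (ρ k) ^ 2).PosSemidef from
          Finset.sum_induction _ Matrix.PosSemidef (fun a b ha hb => ha.add hb)
            Matrix.PosSemidef.zero (fun k _ => (hρ k).pow 2))).trace.re :=
  povm_success_le_holevo_curlander_general ρ hρ M hM hMsum
end

section
/- Let ρ_AB be a density matrix on A⊗B with A, B finite-dimensional, and ρ_A = Tr_B ρ_AB with rank r. Then the conditional min-entropy satisfies H_min(A|B) ≥ −log₂(√r · Tr_B√(Tr_A ρ_AB²)). -/
open Matrix Kronecker ComplexOrder

/-- Partial trace over the first factor of a bipartite matrix on `A ⊗ B`. -/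
noncomputable def ptrA {a b : Type*} [Fintype a]
    (ρ : Matrix (a × b) (a × b) ℂ) : Matrix b b ℂ :=
  Matrix.of fun j j' => ∑ i : a, ρ (i, j) (i, j')

/-- Partial trace over the second factor of a bipartite matrix on `A ⊗ B`. -/
noncomputable def ptrB {a b : Type*} [Fintype b]
    (ρ : Matrix (a × b) (a × b) ℂ) : Matrix a a ℂ :=
  Matrix.of fun i i' => ∑ j : b, ρ (i, j) (i', j)

/-- The conditional min-entropy `H_min(A|B)_ρ
  = -log₂ inf { Tr υ : υ ≥ 0, ρ_AB ≤ 1_A ⊗ υ }`. -/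
noncomputable def condMinEntropy {a b : Type*} [Fintype a] [Fintype b]
    [DecidableEq a] [DecidableEq b]
    (ρ : Matrix (a × b) (a × b) ℂ) : ℝ :=
  -Real.logb 2 (sInf {t : ℝ | ∃ υ : Matrix b b ℂ, υ.PosSemidef ∧
    (((1 : Matrix a a ℂ) ⊗ₖ υ) - ρ).PosSemidef ∧ t = υ.trace.re})

/-!
The witness is `υ = √r • T`. Since the square root is operator monotone, `ρ ≤ 1 ⊗ υ` follows
from `ρ² ≤ (1 ⊗ υ)² = r • (1 ⊗ Tr_A ρ²)`. To prove the latter, rotate `A` into an eigenbasis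
of `ρ_A`: then `ρ` is supported on the `r` blocks `e_k ⊗ B` with nonzero eigenvalue, and
Cauchy–Schwarz `‖∑_{k ∈ F} v_k‖² ≤ |F| ∑_{k ∈ F} ‖v_k‖²` applied to `ρ x` split along these
blocks gives the factor `r`.
-/

open scoped MatrixOrder

open scoped Matrix.Norms.L2Operator in
theorem Matrix.le_of_mul_self_le_mul_self {n : Type*} [Fintype n] [DecidableEq n]
    {A B : Matrix n n ℂ} (hA : 0 ≤ A) (hB : 0 ≤ B) (h : A * A ≤ B * B) : A ≤ B := by
  simpa only [CFC.sqrt_mul_self A hA, CFC.sqrt_mul_self B hB] using CFC.sqrt_le_sqrt _ _ h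

theorem Matrix.PosSemidef.apply_eq_zero_of_diag_eq_zero {n : Type*} [Fintype n] [DecidableEq n]
    {A : Matrix n n ℂ} (hA : A.PosSemidef) {i : n} (hi : A i i = 0) (k : n) : A k i = 0 := by
  have hcol : A *ᵥ Pi.single i 1 = 0 := by
    rw [← hA.dotProduct_mulVec_zero_iff, mulVec_single_one]
    simpa [dotProduct_single] using hi
  simpa [mulVec_single_one] using congrFun hcol k

theorem Matrix.star_dotProduct_conjTranspose_mul_self_mulVec {m n : Type*} [Fintype m]
    [Fintype n] (N : Matrix m n ℂ) (z : n → ℂ) :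
    star z ⬝ᵥ (Nᴴ * N) *ᵥ z = ((‖WithLp.toLp 2 (N *ᵥ z)‖ ^ 2 : ℝ) : ℂ) := by
  rw [← mulVec_mulVec, dotProduct_mulVec, ← star_mulVec, dotProduct_comm,
    ← EuclideanSpace.inner_toLp_toLp, inner_self_eq_norm_sq_to_K]
  push_cast
  rfl

theorem norm_sum_sq_le_card_mul {ι E : Type*} [SeminormedAddCommGroup E] (s : Finset ι)
    (f : ι → E) : ‖∑ i ∈ s, f i‖ ^ 2 ≤ s.card * ∑ i ∈ s, ‖f i‖ ^ 2 :=
  (pow_le_pow_left₀ (norm_nonneg _) (norm_sum_le s f) 2).trans sq_sum_le_card_mul_sum_sq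

section PartialTrace

variable {a b : Type*}

theorem ptrA_eq_sum_submatrix [Fintype a] (X : Matrix (a × b) (a × b) ℂ) :
    ptrA X = ∑ k, X.submatrix (k, ·) (k, ·) := by
  ext j j'
  simp [ptrA, Matrix.sum_apply]

theorem ptrB_eq_sum_submatrix [Fintype b] (X : Matrix (a × b) (a × b) ℂ) :
    ptrB X = ∑ j, X.submatrix (·, j) (·, j) := by
  ext i i'
  simp [ptrB, Matrix.sum_apply]

theorem ptrA_apply_eq_trace_submatrix [Fintype a] (X : Matrix (a × b) (a × b) ℂ) (j j' : b) :
    ptrA X j j' = (X.submatrix (·, j) (·, j')).trace := rfl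

theorem Matrix.PosSemidef.ptrA [Fintype a] {X : Matrix (a × b) (a × b) ℂ} (hX : X.PosSemidef) :
    (ptrA X).PosSemidef := by
  rw [ptrA_eq_sum_submatrix]
  exact posSemidef_sum _ fun k _ => hX.submatrix _

theorem Matrix.PosSemidef.ptrB [Fintype b] {X : Matrix (a × b) (a × b) ℂ}
    (hX : X.PosSemidef) : (ptrB X).PosSemidef := by
  rw [ptrB_eq_sum_submatrix]
  exact posSemidef_sum _ fun j _ => hX.submatrix _

theorem ptrA_conjTranspose_mul_self [Fintype a] {n : Type*} [Fintype n] (M : Matrix n (a × b) ℂ) :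
    ptrA (Mᴴ * M) = ∑ k, (M.submatrix id (k, ·))ᴴ * M.submatrix id (k, ·) := by
  ext j j'
  simp [ptrA, mul_apply, Matrix.sum_apply]

variable [Fintype a] [Fintype b]

theorem mulVec_eq_sum_submatrix_mulVec {n : Type*} (M : Matrix n (a × b) ℂ) (x : a × b → ℂ) :
    M *ᵥ x = ∑ k, M.submatrix id (k, ·) *ᵥ fun j => x (k, j) := by
  ext i
  simp [mulVec, dotProduct, Fintype.sum_prod_type, Finset.sum_apply]

theorem star_dotProduct_one_kronecker_mulVec [DecidableEq a] (σ : Matrix b b ℂ)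
    (x : a × b → ℂ) :
    star x ⬝ᵥ ((1 : Matrix a a ℂ) ⊗ₖ σ) *ᵥ x =
      ∑ k, star (fun j => x (k, j)) ⬝ᵥ σ *ᵥ (fun j => x (k, j)) := by
  simp [dotProduct, mulVec, Fintype.sum_prod_type, one_apply, ite_mul]

theorem submatrix_kronecker_one_mul_mul [DecidableEq b] (A B : Matrix a a ℂ)
    (X : Matrix (a × b) (a × b) ℂ) (j j' : b) :
    ((A ⊗ₖ (1 : Matrix b b ℂ)) * X * (B ⊗ₖ 1)).submatrix (·, j) (·, j') =
      A * X.submatrix (·, j) (·, j') * B := by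
  ext i i'
  simp [mul_apply, Fintype.sum_prod_type, one_apply]

theorem ptrB_kronecker_one_mul_mul [DecidableEq b] (A B : Matrix a a ℂ)
    (X : Matrix (a × b) (a × b) ℂ) :
    ptrB ((A ⊗ₖ (1 : Matrix b b ℂ)) * X * (B ⊗ₖ 1)) = A * ptrB X * B := by
  simp only [ptrB_eq_sum_submatrix, submatrix_kronecker_one_mul_mul, Finset.mul_sum,
    Finset.sum_mul]

theorem ptrA_kronecker_one_mul_mul [DecidableEq a] [DecidableEq b] {A B : Matrix a a ℂ}
    (hBA : B * A = 1) (X : Matrix (a × b) (a × b) ℂ) :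
    ptrA ((A ⊗ₖ (1 : Matrix b b ℂ)) * X * (B ⊗ₖ 1)) = ptrA X := by
  ext j j'
  rw [ptrA_apply_eq_trace_submatrix, submatrix_kronecker_one_mul_mul, trace_mul_cycle, hBA,
    one_mul, ptrA_apply_eq_trace_submatrix]

theorem submatrix_eq_zero_of_ptrB_apply_eq_zero [DecidableEq a] [DecidableEq b]
    {ρ : Matrix (a × b) (a × b) ℂ} (hρ : ρ.PosSemidef) {k : a} (hk : ptrB ρ k k = 0) :
    ρ.submatrix id (k, ·) = 0 := by
  have hdiag : ∀ j, ρ (k, j) (k, j) = 0 := fun j =>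
    (Finset.sum_eq_zero_iff_of_nonneg fun j _ => hρ.diag_nonneg).mp hk j (Finset.mem_univ j)
  ext p j
  exact hρ.apply_eq_zero_of_diag_eq_zero (hdiag j) p

theorem norm_mulVec_sq_le_card_mul_sum {n : Type*} [Fintype n] (M : Matrix n (a × b) ℂ)
    (F : Finset a) (hM : ∀ k ∉ F, M.submatrix id (k, ·) = 0) (x : a × b → ℂ) :
    ‖WithLp.toLp 2 (M *ᵥ x)‖ ^ 2 ≤
      F.card * ∑ k, ∑ l, ‖WithLp.toLp 2 (M.submatrix id (l, ·) *ᵥ fun j => x (k, j))‖ ^ 2 := by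
  have hsupp : M *ᵥ x = ∑ k ∈ F, M.submatrix id (k, ·) *ᵥ fun j => x (k, j) := by
    rw [mulVec_eq_sum_submatrix_mulVec]
    exact (Finset.sum_subset (Finset.subset_univ F) fun k _ hk => by simp [hM k hk]).symm
  calc ‖WithLp.toLp 2 (M *ᵥ x)‖ ^ 2
      ≤ F.card * ∑ k ∈ F, ‖WithLp.toLp 2 (M.submatrix id (k, ·) *ᵥ fun j => x (k, j))‖ ^ 2 := by
        rw [hsupp, WithLp.toLp_sum]
        exact norm_sum_sq_le_card_mul _ _
    _ ≤ F.card * ∑ k, ‖WithLp.toLp 2 (M.submatrix id (k, ·) *ᵥ fun j => x (k, j))‖ ^ 2 := by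
        gcongr
        exact Finset.subset_univ F
    _ ≤ _ := by
        gcongr with k
        exact Finset.single_le_sum
          (f := fun l => ‖WithLp.toLp 2 (M.submatrix id (l, ·) *ᵥ fun j => x (k, j))‖ ^ 2)
          (fun _ _ => by positivity) (Finset.mem_univ k)

theorem conjTranspose_mul_self_le_card_nsmul_one_kronecker_ptrA [DecidableEq a] {n : Type*}
    [Fintype n] (M : Matrix n (a × b) ℂ) (F : Finset a)
    (hM : ∀ k ∉ F, M.submatrix id (k, ·) = 0) :
    Mᴴ * M ≤ F.card • ((1 : Matrix a a ℂ) ⊗ₖ ptrA (Mᴴ * M)) := by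
  have hσ : (ptrA (Mᴴ * M)).PosSemidef := (posSemidef_conjTranspose_mul_self M).ptrA
  have hquad (z : b → ℂ) : star z ⬝ᵥ ptrA (Mᴴ * M) *ᵥ z =
      ((∑ l, ‖WithLp.toLp 2 (M.submatrix id (l, ·) *ᵥ z)‖ ^ 2 : ℝ) : ℂ) := by
    rw [ptrA_conjTranspose_mul_self, Matrix.sum_mulVec, dotProduct_sum, Complex.ofReal_sum]
    exact Finset.sum_congr rfl fun l _ => star_dotProduct_conjTranspose_mul_self_mulVec _ _
  refine PosSemidef.of_dotProduct_mulVec_nonneg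
    (((PosSemidef.one.kronecker hσ).smul (Nat.zero_le F.card)).isHermitian.sub
      (posSemidef_conjTranspose_mul_self M).isHermitian) fun x => ?_
  rw [sub_mulVec, dotProduct_sub, smul_mulVec, dotProduct_smul,
    star_dotProduct_one_kronecker_mulVec, star_dotProduct_conjTranspose_mul_self_mulVec]
  simp only [hquad, nsmul_eq_mul, ← Complex.ofReal_sum, ← Complex.ofReal_natCast,
    ← Complex.ofReal_mul, ← Complex.ofReal_sub, Complex.zero_le_real, sub_nonneg]
  exact norm_mulVec_sq_le_card_mul_sum M F hM x

theorem mul_self_le_card_nsmul_one_kronecker_ptrA [DecidableEq a] [DecidableEq b]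
    {ρ : Matrix (a × b) (a × b) ℂ} (hρ : ρ.PosSemidef) {U : Matrix a a ℂ}
    (hU : U ∈ unitary (Matrix a a ℂ)) (F : Finset a)
    (hF : ∀ k ∉ F, (star U * ptrB ρ * U) k k = 0) :
    ρ * ρ ≤ F.card • ((1 : Matrix a a ℂ) ⊗ₖ ptrA (ρ * ρ)) := by
  have hUU : U * star U = 1 := Unitary.mul_star_self_of_mem hU
  have hW : star (U ⊗ₖ (1 : Matrix b b ℂ)) = star U ⊗ₖ 1 := by
    simp [star_eq_conjTranspose, conjTranspose_kronecker]
  have hWW : (U ⊗ₖ (1 : Matrix b b ℂ)) * (star U ⊗ₖ 1) = 1 := by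
    rw [← mul_kronecker_mul, hUU, one_mul, one_kronecker_one]
  -- `ρ' = (U ⊗ 1)ᴴ ρ (U ⊗ 1)` vanishes on the blocks `k ∉ F` and has the same `Tr_A ρ'²`.
  have hρ' := hρ.conjTranspose_mul_mul_same (U ⊗ₖ (1 : Matrix b b ℂ))
  rw [← star_eq_conjTranspose, hW] at hρ'
  have key := conjTranspose_mul_self_le_card_nsmul_one_kronecker_ptrA _ F fun k hk =>
    submatrix_eq_zero_of_ptrB_apply_eq_zero hρ' (by rw [ptrB_kronecker_one_mul_mul]; exact hF k hk)
  have hsq : ((star U ⊗ₖ 1) * ρ * (U ⊗ₖ 1))ᴴ * ((star U ⊗ₖ 1) * ρ * (U ⊗ₖ 1)) =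
      (star U ⊗ₖ (1 : Matrix b b ℂ)) * (ρ * ρ) * (U ⊗ₖ 1) := by
    rw [hρ'.isHermitian.eq]
    simp only [mul_assoc]
    rw [← mul_assoc (U ⊗ₖ 1) (star U ⊗ₖ 1), hWW, one_mul]
  rw [hsq, ptrA_kronecker_one_mul_mul hUU] at key
  have hle := star_right_conjugate_le_conjugate key (U ⊗ₖ (1 : Matrix b b ℂ))
  rw [hW] at hle
  calc ρ * ρ = (U ⊗ₖ 1) * ((star U ⊗ₖ 1) * (ρ * ρ) * (U ⊗ₖ 1)) * (star U ⊗ₖ 1) := by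
        simp only [← mul_assoc, hWW, one_mul]
        simp only [mul_assoc, hWW, mul_one]
    _ ≤ (U ⊗ₖ 1) * (F.card • ((1 : Matrix a a ℂ) ⊗ₖ ptrA (ρ * ρ))) * (star U ⊗ₖ 1) := hle
    _ = F.card • ((1 : Matrix a a ℂ) ⊗ₖ ptrA (ρ * ρ)) := by
        rw [mul_smul_comm, smul_mul_assoc, ← mul_kronecker_mul, ← mul_kronecker_mul, mul_one, hUU,
          one_mul, mul_one]

theorem mul_self_le_rank_ptrB_nsmul_one_kronecker_ptrA [DecidableEq a] [DecidableEq b]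
    {ρ : Matrix (a × b) (a × b) ℂ} (hρ : ρ.PosSemidef) :
    ρ * ρ ≤ (ptrB ρ).rank • ((1 : Matrix a a ℂ) ⊗ₖ ptrA (ρ * ρ)) := by
  have hA := hρ.ptrB.isHermitian
  rw [hA.rank_eq_card_non_zero_eigs, Fintype.card_subtype]
  refine mul_self_le_card_nsmul_one_kronecker_ptrA hρ hA.eigenvectorUnitary.2 _ fun k hk => ?_
  have hdiag := hA.conjStarAlgAut_star_eigenvectorUnitary
  simp only [Unitary.conjStarAlgAut_apply, Unitary.coe_star, star_star] at hdiag
  simpa [hdiag] using hk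

theorem one_le_card_mul_trace_re_of_le_one_kronecker [DecidableEq a]
    {ρ : Matrix (a × b) (a × b) ℂ} (htr : ρ.trace = 1) {υ : Matrix b b ℂ}
    (hle : ρ ≤ (1 : Matrix a a ℂ) ⊗ₖ υ) : 1 ≤ Fintype.card a * υ.trace.re := by
  have h := (Complex.nonneg_iff.mp (Matrix.le_iff.mp hle).trace_nonneg).1
  rw [trace_sub, trace_kronecker, trace_one, htr] at h
  simpa using h

theorem neg_logb_trace_re_le_condMinEntropy [DecidableEq a] [DecidableEq b]
    {ρ : Matrix (a × b) (a × b) ℂ} (htr : ρ.trace = 1) {υ : Matrix b b ℂ} (hυ : υ.PosSemidef)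
    (hle : ρ ≤ (1 : Matrix a a ℂ) ⊗ₖ υ) : -Real.logb 2 υ.trace.re ≤ condMinEntropy ρ := by
  set S := {t : ℝ | ∃ υ : Matrix b b ℂ, υ.PosSemidef ∧
    (((1 : Matrix a a ℂ) ⊗ₖ υ) - ρ).PosSemidef ∧ t = υ.trace.re}
  have hmem : υ.trace.re ∈ S := ⟨υ, hυ, hle, rfl⟩
  have hcard : (0 : ℝ) < Fintype.card a := Nat.cast_pos.mpr <| Nat.pos_of_ne_zero fun h0 => by
    absurd one_le_card_mul_trace_re_of_le_one_kronecker htr hle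
    simp [h0]
  have hlb : ∀ t ∈ S, (Fintype.card a : ℝ)⁻¹ ≤ t := by
    rintro t ⟨υ', -, hle', rfl⟩
    rw [inv_le_iff_one_le_mul₀' hcard]
    exact one_le_card_mul_trace_re_of_le_one_kronecker htr hle'
  have hpos : 0 < sInf S := (inv_pos.mpr hcard).trans_le (le_csInf ⟨_, hmem⟩ hlb)
  exact neg_le_neg (Real.logb_le_logb_of_le one_lt_two hpos (csInf_le ⟨_, hlb⟩ hmem))

end PartialTrace

/-- Lower bound on the conditional min-entropy (the `s = 0` case):
`H_min(A|B) ≥ -log₂ (√r · Tr_B √(Tr_A ρ_AB²))`, where `r` is the rank of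
`ρ_A = Tr_B ρ_AB`. (The square root `√(Tr_A ρ_AB²)` is characterized as the
positive semidefinite `T` with `T * T = Tr_A ρ_AB²`.) -/
theorem condMinEntropy_lower_bound
    {a b : Type*} [Fintype a] [Fintype b] [DecidableEq a] [DecidableEq b]
    (ρ : Matrix (a × b) (a × b) ℂ) (hρ : ρ.PosSemidef) (htr : ρ.trace = 1)
    (T : Matrix b b ℂ) (hT : T.PosSemidef) (hTsq : T * T = ptrA (ρ * ρ)) :
    -Real.logb 2 (Real.sqrt ((ptrB ρ).rank) * T.trace.re) ≤ condMinEntropy ρ := by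
  set r := (ptrB ρ).rank
  have hυ : ((Real.sqrt r : ℂ) • T).PosSemidef :=
    hT.smul (Complex.zero_le_real.mpr (Real.sqrt_nonneg _))
  have hsq : ((1 : Matrix a a ℂ) ⊗ₖ ((Real.sqrt r : ℂ) • T)) * (1 ⊗ₖ ((Real.sqrt r : ℂ) • T)) =
      r • ((1 : Matrix a a ℂ) ⊗ₖ ptrA (ρ * ρ)) := by
    rw [← mul_kronecker_mul, one_mul, smul_mul_smul_comm, hTsq, ← Complex.ofReal_mul,
      Real.mul_self_sqrt (Nat.cast_nonneg r), Complex.ofReal_natCast, Nat.cast_smul_eq_nsmul,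
      kronecker_smul]
  have hle : ρ ≤ (1 : Matrix a a ℂ) ⊗ₖ ((Real.sqrt r : ℂ) • T) :=
    Matrix.le_of_mul_self_le_mul_self hρ.nonneg (PosSemidef.one.kronecker hυ).nonneg
      (hsq ▸ mul_self_le_rank_ptrB_nsmul_one_kronecker_ptrA hρ)
  simpa [trace_smul] using neg_logb_trace_re_le_condMinEntropy htr hυ hle
end

section
/- Let ρ_AB be a density matrix on A⊗B with A, B finite-dimensional. Then H_min(A|B) ≤ −2 log₂(Tr_B √(Tr_A ρ_AB²)). -/
open Matrix Kronecker ComplexOrder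

/-!
For positive definite `υ`, `⟪X, Y⟫ = Tr (Y υ⁻¹ Xᴴ)` is an inner product with `⟪υ, T⟫ = Tr T`, so
Cauchy–Schwarz gives `(Tr T)² ≤ Tr υ · Tr (T υ⁻¹ T) = Tr υ · Tr (ρ (1 ⊗ υ)⁻¹ ρ)`, the last step
because `T² = Tr_A ρ²`. If moreover `ρ ≤ 1 ⊗ υ`, then `ρ (1 ⊗ υ)⁻¹ ρ ≤ ρ`, whose trace is `1`.
Hence every feasible `υ` has `Tr υ ≥ (Tr T)²`, singular `υ` by the limit of `υ + δ • 1`.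
-/

open Filter Topology

section PartialTrace

variable {a b : Type*} [Fintype a] [Fintype b]

theorem trace_ptrA (M : Matrix (a × b) (a × b) ℂ) : (ptrA M).trace = M.trace := by
  simp only [trace, ptrA, diag, of_apply, Fintype.sum_prod_type]
  exact Finset.sum_comm

theorem trace_one_kronecker_mul [DecidableEq a] (X : Matrix b b ℂ) (M : Matrix (a × b) (a × b) ℂ) :
    ((1 ⊗ₖ X) * M).trace = (X * ptrA M).trace := by
  simp only [trace, diag, mul_apply, ptrA, of_apply, Fintype.sum_prod_type, kroneckerMap_apply,
    one_apply, ite_mul, one_mul, zero_mul, Finset.sum_ite_irrel, Finset.sum_const_zero,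
    Finset.sum_ite_eq, Finset.mem_univ, if_true, Finset.mul_sum]
  rw [Finset.sum_comm]
  exact Finset.sum_congr rfl fun _ _ => Finset.sum_comm

end PartialTrace

section

variable {n : Type*} [Fintype n]

theorem Matrix.trace_re_le_of_posSemidef_sub {A B : Matrix n n ℂ} (h : (B - A).PosSemidef) :
    A.trace.re ≤ B.trace.re := by
  simpa [trace_sub] using (Complex.nonneg_iff.mp h.trace_nonneg).1

theorem Matrix.PosSemidef.trace_re_nonneg {A : Matrix n n ℂ} (hA : A.PosSemidef) :
    0 ≤ A.trace.re :=
  (Complex.nonneg_iff.mp hA.trace_nonneg).1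

theorem Matrix.PosSemidef.trace_re_pos {A : Matrix n n ℂ} (hA : A.PosSemidef) (h : A ≠ 0) :
    0 < A.trace.re :=
  (Complex.pos_iff.mp (hA.trace_nonneg.lt_of_ne' (hA.trace_eq_zero_iff.not.mpr h))).1

variable [DecidableEq n]

theorem Matrix.IsHermitian.exists_posSemidef_smul_one_sub {A : Matrix n n ℂ}
    (hA : A.IsHermitian) : ∃ c : ℝ, 0 ≤ c ∧ ((c : ℂ) • 1 - A).PosSemidef := by
  open scoped Matrix.Norms.L2Operator MatrixOrder in
  refine ⟨‖A‖, norm_nonneg _, ?_⟩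
  have h := IsSelfAdjoint.le_algebraMap_norm_self hA.isSelfAdjoint
  rw [Algebra.algebraMap_eq_smul_one] at h
  simpa [Matrix.le_iff] using h

theorem Matrix.PosDef.norm_trace_sq_le {U : Matrix n n ℂ} (hU : U.PosDef) (X : Matrix n n ℂ) :
    ‖X.trace‖ ^ 2 ≤ U.trace.re * (X * U⁻¹ * Xᴴ).trace.re := by
  let := U⁻¹.toMatrixSeminormedAddCommGroup hU.inv.posSemidef
  let := U⁻¹.toMatrixInnerProductSpace hU.inv.posSemidef
  have hdet := (isUnit_iff_isUnit_det U).mp hU.isUnit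
  have h := inner_mul_inner_self_le (𝕜 := ℂ) X U
  -- the inner product induced by `U⁻¹` is `⟪X, Y⟫ = Tr (Y U⁻¹ Xᴴ)`
  change ‖(U * U⁻¹ * Xᴴ).trace‖ * ‖(X * U⁻¹ * Uᴴ).trace‖ ≤
    (X * U⁻¹ * Xᴴ).trace.re * (U * U⁻¹ * Uᴴ).trace.re at h
  rwa [hU.isHermitian.eq, mul_nonsing_inv _ hdet, Matrix.one_mul, Matrix.mul_assoc,
    nonsing_inv_mul _ hdet, Matrix.mul_one, trace_conjTranspose, norm_star, ← sq, mul_comm,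
    Matrix.one_mul] at h

theorem Matrix.PosSemidef.sub_mul_self_of_le_one {σ : Matrix n n ℂ} (hσ : σ.PosSemidef)
    (hσ₁ : (1 - σ).PosSemidef) : (σ - σ * σ).PosSemidef := by
  open scoped MatrixOrder in
  obtain ⟨W, hW, hWW⟩ : ∃ W : Matrix n n ℂ, W.IsHermitian ∧ W * W = σ :=
    ⟨CFC.sqrt σ, (CFC.sqrt_nonneg σ).posSemidef.isHermitian, CFC.sqrt_mul_sqrt_self σ hσ.nonneg⟩
  have h := hσ₁.conjTranspose_mul_mul_same W
  rw [hW.eq] at h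
  convert h using 1
  rw [← hWW]
  noncomm_ring

theorem Matrix.PosDef.posSemidef_sub_mul_inv_mul {U ρ : Matrix n n ℂ} (hU : U.PosDef)
    (hρ : ρ.PosSemidef) (hρU : (U - ρ).PosSemidef) : (ρ - ρ * U⁻¹ * ρ).PosSemidef := by
  -- with `S = √U`, `σ = S⁻¹ ρ S⁻¹` lies between `0` and `1`, so `σ² ≤ σ`; conjugate back by `S`
  open scoped MatrixOrder in
  obtain ⟨S, hS, hSS⟩ : ∃ S : Matrix n n ℂ, S.IsHermitian ∧ S * S = U :=
    ⟨CFC.sqrt U, (CFC.sqrt_nonneg U).posSemidef.isHermitian,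
      CFC.sqrt_mul_sqrt_self U hU.posSemidef.nonneg⟩
  have hdet : IsUnit S.det := by
    refine isUnit_of_mul_isUnit_left (y := S.det) ?_
    rw [← det_mul, hSS]
    exact (isUnit_iff_isUnit_det U).mp hU.isUnit
  have hS' : S⁻¹ᴴ = S⁻¹ := by rw [conjTranspose_nonsing_inv, hS.eq]
  have hSUS : S⁻¹ * U * S⁻¹ = 1 := by
    rw [← hSS, ← Matrix.mul_assoc, nonsing_inv_mul _ hdet, Matrix.one_mul, mul_nonsing_inv _ hdet]
  set σ := S⁻¹ * ρ * S⁻¹ with hσ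
  have hSσ : S * σ = ρ * S⁻¹ := by
    rw [hσ, ← Matrix.mul_assoc, ← Matrix.mul_assoc, mul_nonsing_inv _ hdet, Matrix.one_mul]
  have hσS : σ * S = S⁻¹ * ρ := by
    rw [hσ, Matrix.mul_assoc, nonsing_inv_mul _ hdet, Matrix.mul_one]
  have hσ₀ : σ.PosSemidef := by simpa [hS'] using hρ.conjTranspose_mul_mul_same S⁻¹
  have hσ₁ : (1 - σ).PosSemidef := by
    convert hρU.conjTranspose_mul_mul_same S⁻¹ using 1
    rw [hS', Matrix.mul_sub, Matrix.sub_mul, hSUS]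
  have hSσS : S * σ * S = ρ := by
    rw [hSσ, Matrix.mul_assoc, nonsing_inv_mul _ hdet, Matrix.mul_one]
  have hSσσS : S * (σ * σ) * S = ρ * U⁻¹ * ρ := by
    rw [← hSS, Matrix.mul_inv_rev, Matrix.mul_assoc, Matrix.mul_assoc σ, hσS, ← Matrix.mul_assoc,
      hSσ]
    simp only [Matrix.mul_assoc]
  convert (hσ₀.sub_mul_self_of_le_one hσ₁).conjTranspose_mul_mul_same S using 1
  rw [hS.eq, Matrix.mul_sub, Matrix.sub_mul, hSσS, hSσσS]

end

section

variable {a b : Type*} [Fintype a] [Fintype b] [DecidableEq a] [DecidableEq b]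
  {ρ : Matrix (a × b) (a × b) ℂ} {T υ : Matrix b b ℂ}

theorem sq_trace_re_le_of_posDef (hρ : ρ.PosSemidef) (hT : T.IsHermitian)
    (hTsq : T * T = ptrA (ρ * ρ)) (hυ : υ.PosDef) (hυρ : ((1 ⊗ₖ υ) - ρ).PosSemidef) :
    T.trace.re ^ 2 ≤ υ.trace.re * ρ.trace.re := by
  have hU : (1 ⊗ₖ υ : Matrix (a × b) (a × b) ℂ).PosDef := PosDef.one.kronecker hυ
  have htrace : (T * υ⁻¹ * Tᴴ).trace = (ρ * (1 ⊗ₖ υ)⁻¹ * ρ).trace := by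
    rw [hT.eq, trace_mul_cycle, hTsq, trace_mul_comm, ← trace_one_kronecker_mul, trace_mul_cycle,
      trace_mul_comm, inv_kronecker, inv_one]
  calc T.trace.re ^ 2 ≤ ‖T.trace‖ ^ 2 := by
        simpa only [sq_abs] using pow_le_pow_left₀ (abs_nonneg _) (Complex.abs_re_le_norm _) 2
    _ ≤ υ.trace.re * (T * υ⁻¹ * Tᴴ).trace.re := hυ.norm_trace_sq_le T
    _ ≤ υ.trace.re * ρ.trace.re := by
        rw [htrace]
        exact mul_le_mul_of_nonneg_left
          (trace_re_le_of_posSemidef_sub (hU.posSemidef_sub_mul_inv_mul hρ hυρ))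
          hυ.posSemidef.trace_re_nonneg

theorem sq_trace_re_le_of_posSemidef (hρ : ρ.PosSemidef) (hT : T.IsHermitian)
    (hTsq : T * T = ptrA (ρ * ρ)) (hυ : υ.PosSemidef) (hυρ : ((1 ⊗ₖ υ) - ρ).PosSemidef) :
    T.trace.re ^ 2 ≤ υ.trace.re * ρ.trace.re := by
  have hlim : Tendsto (fun δ : ℝ => (υ.trace.re + δ * Fintype.card b) * ρ.trace.re) (𝓝[>] 0)
      (𝓝 (υ.trace.re * ρ.trace.re)) := by
    refine tendsto_nhdsWithin_of_tendsto_nhds ?_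
    exact (by fun_prop : Continuous _).tendsto' (0 : ℝ) _ (by simp)
  refine ge_of_tendsto hlim (eventually_nhdsWithin_of_forall fun δ (hδ : 0 < δ) => ?_)
  have hυδ : (υ + δ • 1).PosDef := PosDef.posSemidef_add hυ (PosDef.one.smul hδ)
  have hυδρ : ((1 ⊗ₖ (υ + δ • 1)) - ρ).PosSemidef := by
    rw [kronecker_add, kronecker_smul, one_kronecker_one, add_sub_right_comm]
    exact hυρ.add (PosDef.one.smul hδ).posSemidef
  simpa using sq_trace_re_le_of_posDef hρ hT hTsq hυδ hυδρ

end

theorem ne_zero_of_mul_self_eq_ptrA {a b : Type*} [Fintype a] [Fintype b]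
    {ρ : Matrix (a × b) (a × b) ℂ} {T : Matrix b b ℂ} (hρ : ρ.IsHermitian) (hρ₀ : ρ ≠ 0)
    (hTsq : T * T = ptrA (ρ * ρ)) : T ≠ 0 := by
  rintro rfl
  apply hρ₀
  rw [← trace_conjTranspose_mul_self_eq_zero_iff, hρ.eq, ← trace_ptrA, ← hTsq, zero_mul,
    trace_zero]

/-- Upper bound on the conditional min-entropy (the `s = 0` case):
`H_min(A|B) ≤ -2 log₂ (Tr_B √(Tr_A ρ_AB²))`, where the square root
`√(Tr_A ρ_AB²)` is characterized as the positive semidefinite `T` with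
`T * T = Tr_A ρ_AB²`. -/
theorem condMinEntropy_upper_bound
    {a b : Type*} [Fintype a] [Fintype b] [DecidableEq a] [DecidableEq b]
    (ρ : Matrix (a × b) (a × b) ℂ) (hρ : ρ.PosSemidef) (htr : ρ.trace = 1)
    (T : Matrix b b ℂ) (hT : T.PosSemidef) (hTsq : T * T = ptrA (ρ * ρ)) :
    condMinEntropy ρ ≤ -(2 * Real.logb 2 (T.trace.re)) := by
  have hρ₀ : ρ ≠ 0 := by
    rintro rfl
    simp at htr
  have hTpos := hT.trace_re_pos (ne_zero_of_mul_self_eq_ptrA hρ.isHermitian hρ₀ hTsq)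
  obtain ⟨c, hc, hcρ⟩ := hρ.isHermitian.exists_posSemidef_smul_one_sub
  rw [condMinEntropy, neg_le_neg_iff, ← Real.logb_rpow_eq_mul_logb_of_pos hTpos]
  refine Real.logb_le_logb_of_le one_lt_two (by positivity) (le_csInf ?_ ?_)
  · refine ⟨_, (c : ℂ) • 1, PosSemidef.one.smul (by exact_mod_cast hc), ?_, rfl⟩
    rwa [kronecker_smul, one_kronecker_one]
  · rintro _ ⟨υ, hυ, hυρ, rfl⟩
    simpa [htr] using sq_trace_re_le_of_posSemidef hρ hT.isHermitian hTsq hυ hυρ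
end

section
/- Let ψ_AB be a unit vector in A⊗B (A, B finite-dimensional) with reduced state ρ_A = Tr_B|ψ⟩⟨ψ|. Then H_min(A|B) for the pure state |ψ_AB⟩⟨ψ_AB| equals −2 log₂(Tr_A √ρ_A). -/
/-!
Write `ψ = vec Y` for a `B × A` matrix `Y`. Then `ρ_A = (Yᴴ Y)ᵀ`, so `S = Tᵀ` is positive
semidefinite with `S² = Yᴴ Y`, and `Y = V S` for a partial isometry `V` (`V Vᴴ` a projection,
`S Vᴴ V = S`). Evaluated at `vec Φ`, the condition `|ψ⟩⟨ψ| ≤ 1 ⊗ υ` reads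
`|Tr (Yᴴ Φ)|² ≤ Tr (Φᴴ υ Φ)`. The choice `Φ = V` gives `(Tr S)² ≤ Tr υ`, and by Cauchy–Schwarz for
the semi-inner product `⟪C, D⟫ = Tr (D S Cᴴ)` the operator `υ = Tr S • V S Vᴴ` attains this bound.
-/

open Matrix Kronecker ComplexOrder

namespace Matrix

variable {𝕜 : Type*} [RCLike 𝕜] {m n : Type*} [Fintype m] [Fintype n] [DecidableEq n]

/-- `P = cfc (·⁻¹) T` works because `0⁻¹ = 0` in `ℝ`. -/
theorem IsHermitian.exists_pseudoinverse {T : Matrix n n 𝕜} (hT : T.IsHermitian) :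
    ∃ P : Matrix n n 𝕜, P.IsHermitian ∧ Commute T P ∧ T * P * T = T ∧ P * T * P = P := by
  have hsa : IsSelfAdjoint T := hT.isSelfAdjoint
  have hmul (f g : ℝ → ℝ) : cfc (fun t => f t * g t) T = cfc f T * cfc g T :=
    cfc_mul f g T (T.finite_real_spectrum.continuousOn f) (T.finite_real_spectrum.continuousOn g)
  have hid : cfc (fun t : ℝ => t) T = T := cfc_id' ℝ T
  refine ⟨cfc (fun t : ℝ => t⁻¹) T, IsSelfAdjoint.isHermitian (cfc_predicate _ T), ?_, ?_, ?_⟩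
  · simpa only [hid] using cfc_commute_cfc (fun t : ℝ => t) (fun t => t⁻¹) T
  · calc _ = cfc (fun t : ℝ => t * t⁻¹ * t) T := by rw [hmul, hmul, hid]
      _ = T := by simp only [mul_inv_mul_cancel, hid]
  · calc _ = cfc (fun t : ℝ => t⁻¹ * t * t⁻¹) T := by rw [hmul, hmul, hid]
      _ = _ := cfc_congr fun t _ => by simpa using mul_inv_mul_cancel t⁻¹

theorem exists_polar_decomposition {Y : Matrix m n 𝕜} {T : Matrix n n 𝕜} (hT : T.IsHermitian)
    (hY : Yᴴ * Y = T * T) :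
    ∃ V : Matrix m n 𝕜, Y = V * T ∧ T * (Vᴴ * V) = T ∧ IsStarProjection (V * Vᴴ) := by
  obtain ⟨P, hP, hTP, hTPT, hPTP⟩ := hT.exists_pseudoinverse
  have hVV : (Y * P)ᴴ * (Y * P) = T * P := by
    rw [conjTranspose_mul, hP.eq, Matrix.mul_assoc, ← Matrix.mul_assoc Yᴴ, hY,
      ← Matrix.mul_assoc, ← Matrix.mul_assoc, ← hTP.eq, hTPT, hTP.eq]
  refine ⟨Y * P, ?_, ?_, ⟨?_, (isHermitian_mul_conjTranspose_self _).isSelfAdjoint⟩⟩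
  · have hker : (1 - T * P) * T = 0 := by rw [Matrix.sub_mul, one_mul, hTPT, sub_self]
    have h0 : (Y * (1 - P * T))ᴴ * (Y * (1 - P * T)) = 0 := by
      rw [conjTranspose_mul, conjTranspose_sub, conjTranspose_one, conjTranspose_mul, hP.eq,
        hT.eq, Matrix.mul_assoc, ← Matrix.mul_assoc Yᴴ, hY, ← Matrix.mul_assoc,
        ← Matrix.mul_assoc, hker, Matrix.zero_mul, Matrix.zero_mul]
    rw [conjTranspose_mul_self_eq_zero, Matrix.mul_sub, Matrix.mul_one, sub_eq_zero] at h0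
    rwa [Matrix.mul_assoc]
  · rw [hVV, ← Matrix.mul_assoc, Matrix.mul_assoc T T, hTP.eq, ← Matrix.mul_assoc, hTPT]
  · show Y * P * (Y * P)ᴴ * (Y * P * (Y * P)ᴴ) = Y * P * (Y * P)ᴴ
    rw [← Matrix.mul_assoc, Matrix.mul_assoc _ _ (Y * P), hVV, Matrix.mul_assoc Y,
      ← Matrix.mul_assoc P, hPTP]

theorem PosSemidef.norm_trace_mul_conjTranspose_sq_le {T : Matrix n n 𝕜} (hT : T.PosSemidef)
    (C : Matrix n n 𝕜) :
    ‖(T * Cᴴ).trace‖ ^ 2 ≤ RCLike.re T.trace * RCLike.re (C * T * Cᴴ).trace := by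
  let := T.toMatrixSeminormedAddCommGroup hT
  let := T.toMatrixInnerProductSpace hT
  have hCS : ‖(1 * T * Cᴴ).trace‖ ≤ ‖C‖ * ‖(1 : Matrix n n 𝕜)‖ := norm_inner_le_norm (𝕜 := 𝕜) C 1
  have hC : ‖C‖ ^ 2 = RCLike.re (C * T * Cᴴ).trace := norm_sq_eq_re_inner (𝕜 := 𝕜) C
  have h1 : ‖(1 : Matrix n n 𝕜)‖ ^ 2 = RCLike.re (1 * T * 1ᴴ).trace :=
    norm_sq_eq_re_inner (𝕜 := 𝕜) (1 : Matrix n n 𝕜)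
  rw [Matrix.one_mul] at hCS
  rw [Matrix.one_mul, conjTranspose_one, Matrix.mul_one] at h1
  rw [← hC, ← h1, ← mul_pow, mul_comm]
  gcongr

theorem PosSemidef.trace_conjTranspose_mul_mul_le {υ : Matrix n n 𝕜} (hυ : υ.PosSemidef)
    {V : Matrix n m 𝕜} (hV : IsStarProjection (V * Vᴴ)) : (Vᴴ * υ * V).trace ≤ υ.trace := by
  set Q := 1 - V * Vᴴ
  have hQ : IsStarProjection Q := hV.one_sub
  have hQh : Qᴴ = Q := hQ.isSelfAdjoint
  have h : (Qᴴ * υ * Q).trace = υ.trace - (Vᴴ * υ * V).trace := by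
    rw [trace_mul_cycle, trace_mul_cycle Vᴴ, hQh, hQ.isIdempotentElem.eq, Matrix.sub_mul,
      Matrix.one_mul, trace_sub]
  exact sub_nonneg.mp (h ▸ (hυ.conjTranspose_mul_mul_same Q).trace_nonneg)

theorem star_vec_dotProduct_one_kronecker_sub_vecMulVec_mulVec (Y Φ : Matrix m n 𝕜)
    (υ : Matrix m m 𝕜) :
    star (vec Φ) ⬝ᵥ (((1 : Matrix n n 𝕜) ⊗ₖ υ - vecMulVec (vec Y) (star (vec Y))) *ᵥ vec Φ) =
      (Φᴴ * υ * Φ).trace - star (Yᴴ * Φ).trace * (Yᴴ * Φ).trace := by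
  rw [sub_mulVec, dotProduct_sub, ← vec_mul_eq_mulVec, star_vec_dotProduct_vec, vecMulVec_mulVec,
    op_smul_eq_smul, dotProduct_smul, star_vec_dotProduct_vec, star_vec_dotProduct_vec,
    smul_eq_mul, ← trace_conjTranspose, conjTranspose_mul, conjTranspose_conjTranspose,
    Matrix.mul_assoc, mul_comm]

theorem posSemidef_one_kronecker_sub_vecMulVec_vec_iff {Y : Matrix m n 𝕜} {υ : Matrix m m 𝕜}
    (hυ : υ.IsHermitian) :
    ((1 : Matrix n n 𝕜) ⊗ₖ υ - vecMulVec (vec Y) (star (vec Y))).PosSemidef ↔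
      ∀ Φ : Matrix m n 𝕜, ‖(Yᴴ * Φ).trace‖ ^ 2 ≤ RCLike.re (Φᴴ * υ * Φ).trace := by
  have hherm : ((1 : Matrix n n 𝕜) ⊗ₖ υ - vecMulVec (vec Y) (star (vec Y))).IsHermitian := by
    refine IsHermitian.sub ?_ (posSemidef_vecMulVec_self_star _).isHermitian
    rw [IsHermitian, conjTranspose_kronecker, conjTranspose_one, hυ.eq]
  rw [posSemidef_iff_dotProduct_mulVec, and_iff_right hherm, vec_bijective.surjective.forall]
  refine forall_congr' fun Φ => ?_
  have him : RCLike.im (Φᴴ * υ * Φ).trace = 0 := RCLike.conj_eq_iff_im.mp <| by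
    rw [← RCLike.star_def, ← trace_conjTranspose, (isHermitian_conjTranspose_mul_mul Φ hυ).eq]
  rw [star_vec_dotProduct_one_kronecker_sub_vecMulVec_mulVec, RCLike.star_def, RCLike.conj_mul,
    RCLike.nonneg_iff]
  simp only [map_sub, RCLike.re_ofReal_pow, sub_nonneg, him, RCLike.im_ofReal_pow, sub_self,
    and_true]

theorem sq_re_trace_le_of_posSemidef_one_kronecker_sub [DecidableEq m] {Y : Matrix m n 𝕜}
    {T : Matrix n n 𝕜} (hT : T.PosSemidef) (hY : Yᴴ * Y = T * T) {υ : Matrix m m 𝕜}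
    (hυ : υ.PosSemidef)
    (hfeas : ((1 : Matrix n n 𝕜) ⊗ₖ υ - vecMulVec (vec Y) (star (vec Y))).PosSemidef) :
    RCLike.re T.trace ^ 2 ≤ RCLike.re υ.trace := by
  obtain ⟨V, hYV, hTV, hVV⟩ := exists_polar_decomposition hT.1 hY
  have hYV : (Yᴴ * V).trace = T.trace := by
    rw [hYV, conjTranspose_mul, hT.1.eq, Matrix.mul_assoc, hTV]
  calc RCLike.re T.trace ^ 2 ≤ ‖T.trace‖ ^ 2 := by
        gcongr
        · exact (RCLike.nonneg_iff.mp hT.trace_nonneg).1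
        · exact RCLike.re_le_norm _
    _ ≤ RCLike.re (Vᴴ * υ * V).trace :=
        hYV ▸ (posSemidef_one_kronecker_sub_vecMulVec_vec_iff hυ.1).mp hfeas V
    _ ≤ RCLike.re υ.trace := RCLike.re_le_re (hυ.trace_conjTranspose_mul_mul_le hVV)

theorem exists_posSemidef_one_kronecker_sub_vecMulVec_vec {Y : Matrix m n 𝕜}
    {T : Matrix n n 𝕜} (hT : T.PosSemidef) (hY : Yᴴ * Y = T * T) :
    ∃ υ : Matrix m m 𝕜, υ.PosSemidef ∧
      ((1 : Matrix n n 𝕜) ⊗ₖ υ - vecMulVec (vec Y) (star (vec Y))).PosSemidef ∧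
      RCLike.re υ.trace = RCLike.re T.trace ^ 2 := by
  obtain ⟨V, hYV, hTV, -⟩ := exists_polar_decomposition hT.1 hY
  have hτ : 0 ≤ RCLike.re T.trace := (RCLike.nonneg_iff.mp hT.trace_nonneg).1
  have hυ : (RCLike.re T.trace • (V * T * Vᴴ)).PosSemidef :=
    (hT.mul_mul_conjTranspose_same V).smul hτ
  refine ⟨_, hυ, (posSemidef_one_kronecker_sub_vecMulVec_vec_iff hυ.1).mpr fun Φ => ?_, ?_⟩
  · rw [hYV, conjTranspose_mul, hT.1.eq, Matrix.mul_smul, Matrix.smul_mul, trace_smul,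
      RCLike.smul_re]
    simpa only [conjTranspose_mul, conjTranspose_conjTranspose, Matrix.mul_assoc] using
      hT.norm_trace_mul_conjTranspose_sq_le (Φᴴ * V)
  · rw [trace_smul, Matrix.mul_assoc, trace_mul_comm, Matrix.mul_assoc, hTV, RCLike.smul_re, sq]

theorem isLeast_trace_posSemidef_one_kronecker_sub_vecMulVec_vec [DecidableEq m]
    {Y : Matrix m n 𝕜} {T : Matrix n n 𝕜} (hT : T.PosSemidef) (hY : Yᴴ * Y = T * T) :
    IsLeast {t : ℝ | ∃ υ : Matrix m m 𝕜, υ.PosSemidef ∧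
      ((1 : Matrix n n 𝕜) ⊗ₖ υ - vecMulVec (vec Y) (star (vec Y))).PosSemidef ∧
        t = RCLike.re υ.trace} (RCLike.re T.trace ^ 2) := by
  refine ⟨?_, ?_⟩
  · obtain ⟨υ, hυ, hfeas, htr⟩ := exists_posSemidef_one_kronecker_sub_vecMulVec_vec hT hY
    exact ⟨υ, hυ, hfeas, htr.symm⟩
  · rintro _ ⟨υ, hυ, hfeas, rfl⟩
    exact sq_re_trace_le_of_posSemidef_one_kronecker_sub hT hY hυ hfeas

end Matrix

theorem ptrB_vecMulVec_vec {a b : Type*} [Fintype b] (Y : Matrix b a ℂ) :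
    ptrB (vecMulVec (vec Y) (star (vec Y))) = (Yᴴ * Y)ᵀ := by
  ext i i'
  simp only [ptrB, vecMulVec_apply, vec, Pi.star_apply, RCLike.star_def, of_apply,
    transpose_apply, mul_apply, conjTranspose_apply, mul_comm]

theorem condMinEntropy_pure_state_general
    {a b : Type*} [Fintype a] [Fintype b] [DecidableEq a] [DecidableEq b]
    (ψ : a × b → ℂ)
    (T : Matrix a a ℂ) (hT : T.PosSemidef)
    (hTsq : T * T = ptrB (Matrix.vecMulVec ψ (star ψ))) :
    condMinEntropy (Matrix.vecMulVec ψ (star ψ)) =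
      -(2 * Real.logb 2 (T.trace.re)) := by
  set Y : Matrix b a ℂ := Matrix.of fun j i => ψ (i, j)
  have hψ : ψ = vec Y := rfl
  have hY : Yᴴ * Y = Tᵀ * Tᵀ := by
    rw [← transpose_mul, hTsq, hψ, ptrB_vecMulVec_vec, transpose_transpose]
  have hmin := isLeast_trace_posSemidef_one_kronecker_sub_vecMulVec_vec hT.transpose hY
  simp only [RCLike.re_to_complex, trace_transpose] at hmin
  rw [condMinEntropy, hψ, hmin.csInf_eq, Real.logb_pow]
  push_cast
  ring

/-- For a pure bipartite state `ρ_AB = |ψ⟩⟨ψ|` with reduced state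
`ρ_A = Tr_B |ψ⟩⟨ψ|`, the conditional min-entropy equals `-2 log₂ (Tr_A √ρ_A)`,
where `√ρ_A` is characterized as the positive semidefinite `T` with `T * T = ρ_A`. -/
theorem condMinEntropy_pure_state
    {a b : Type*} [Fintype a] [Fintype b] [DecidableEq a] [DecidableEq b]
    (ψ : a × b → ℂ) (hψ : star ψ ⬝ᵥ ψ = 1)
    (T : Matrix a a ℂ) (hT : T.PosSemidef)
    (hTsq : T * T = ptrB (Matrix.vecMulVec ψ (star ψ))) :
    condMinEntropy (Matrix.vecMulVec ψ (star ψ)) =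
      -(2 * Real.logb 2 (T.trace.re)) :=
  condMinEntropy_pure_state_general ψ T hT hTsq
end
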